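/- Let m, n be natural numbers with 2 ≤ m and 2m ≤ n. Then φ(m, n+1) = m · φ(m, n) + m · n · φ(m−1, n−1). -/

import Mathlib

/-!
Remove the last object from an admissible placement of `n + 1` objects into `m` urns. If its urn
held at least three objects, what is left is an admissible placement of `n` objects, and the urn
of the last object is arbitrary: `m * φ(m, n)` placements. Otherwise its urn held exactly one
other object `j`; removing `j` and that urn as well leaves an admissible placement of `n - 1`
objects into `m - 1` urns, with `m` choices for the urn and `n` for `j`.
-/

/-- `phi m n` is the number of ways to place `n` distinct objects into `m` numbered urns
so that each urn receives at least two objects, i.e. the number of functions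
`f : Fin n → Fin m` all of whose fibers have at least two elements. -/
def phi (m n : ℕ) : ℕ :=
  Fintype.card {f : Fin n → Fin m // ∀ i : Fin m, 2 ≤ (Finset.univ.filter fun x => f x = i).card}

open Finset

variable {α β : Type*}

section Fibers

variable [Fintype α] [DecidableEq β]

def fiberCard (f : α → β) (b : β) : ℕ := #{x | f x = b}

def FibersAtLeastTwo (f : α → β) : Prop := ∀ b, 2 ≤ fiberCard f b

instance [Fintype β] : DecidablePred (FibersAtLeastTwo : (α → β) → Prop) :=
  fun f => inferInstanceAs (Decidable (∀ b, 2 ≤ fiberCard f b))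

theorem fiberCard_eq_card_subtype (f : α → β) (b : β) :
    fiberCard f b = Fintype.card {x // f x = b} :=
  (Fintype.card_subtype _).symm

theorem fiberCard_eq_one_iff {f : α → β} {a : α} {b : β} (ha : f a = b) :
    fiberCard f b = 1 ↔ ∀ x ≠ a, f x ≠ b := by
  rw [fiberCard, card_eq_one]
  constructor
  · rintro ⟨y, hy⟩ x hx hxb
    have hmem : ∀ z, f z = b → z = y := fun z hz => by
      simpa [hz] using (Finset.ext_iff.mp hy z).mp
    exact hx ((hmem x hxb).trans (hmem a ha).symm)
  · intro h
    refine ⟨a, eq_singleton_iff_unique_mem.mpr ⟨by simpa using ha, fun x hx => ?_⟩⟩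
    by_contra hxa
    exact h x hxa (by simpa using hx)

theorem fiberCard_arrowCongr {α' β' : Type*} [Fintype α'] [DecidableEq β']
    (e : α ≃ α') (e' : β ≃ β') (f : α → β) (b : β') :
    fiberCard (e.arrowCongr e' f) b = fiberCard f (e'.symm b) := by
  rw [fiberCard_eq_card_subtype, fiberCard_eq_card_subtype]
  exact (Fintype.card_congr (e.subtypeEquiv fun x => by simp [Equiv.eq_symm_apply])).symm

end Fibers

theorem card_fibersAtLeastTwo_congr {α' β' : Type*} [Fintype α] [DecidableEq α] [Fintype β]
    [DecidableEq β] [Fintype α'] [DecidableEq α'] [Fintype β'] [DecidableEq β']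
    (e : α ≃ α') (e' : β ≃ β') :
    Fintype.card {f : α → β // FibersAtLeastTwo f} =
      Fintype.card {f : α' → β' // FibersAtLeastTwo f} :=
  Fintype.card_congr <| (e.arrowCongr e').subtypeEquiv fun f => by
    simp only [FibersAtLeastTwo, fiberCard_arrowCongr]
    exact e'.symm.forall_congr_right.symm

theorem card_fibersAtLeastTwo [Fintype α] [DecidableEq α] [Fintype β] [DecidableEq β] :
    Fintype.card {f : α → β // FibersAtLeastTwo f} = phi (Fintype.card β) (Fintype.card α) := by
  rw [card_fibersAtLeastTwo_congr (Fintype.equivFin α) (Fintype.equivFin β)]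
  exact Fintype.card_congr (Equiv.subtypeEquivRight fun _ => Iff.rfl)

section Option

variable [Fintype α] [DecidableEq β]

-- The extra object is `none`: `fun x => x.elim c g` puts it into urn `c` and the others by `g`.
theorem fiberCard_optionElim (c : β) (g : α → β) (b : β) :
    fiberCard (fun x : Option α => x.elim c g) b = fiberCard g b + if c = b then 1 else 0 := by
  simp only [fiberCard, card_filter, Fintype.sum_option, Option.elim_none, Option.elim_some]
  exact add_comm _ _

theorem fibersAtLeastTwo_optionElim_iff (c : β) (g : α → β) :
    FibersAtLeastTwo (fun x : Option α => x.elim c g) ↔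
      FibersAtLeastTwo g ∨ (fiberCard g c = 1 ∧ ∀ b ≠ c, 2 ≤ fiberCard g b) := by
  simp only [FibersAtLeastTwo, fiberCard_optionElim]
  constructor
  · intro h
    have hc := h c
    rw [if_pos rfl] at hc
    by_cases hc2 : 2 ≤ fiberCard g c
    · refine Or.inl fun b => ?_
      obtain rfl | hb := eq_or_ne b c
      · exact hc2
      · simpa [Ne.symm hb] using h b
    · exact Or.inr ⟨by omega, fun b hb => by simpa [Ne.symm hb] using h b⟩
  · rintro (h | ⟨hc, h⟩) b
    · exact (h b).trans (Nat.le_add_right _ _)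
    · obtain rfl | hb := eq_or_ne b c
      · simp [hc]
      · simpa [Ne.symm hb] using h b hb

variable [DecidableEq α] [Fintype β]

theorem card_fibersAtLeastTwo_option :
    Fintype.card {f : Option α → β // FibersAtLeastTwo f} =
      ∑ c, Fintype.card {g : α → β // FibersAtLeastTwo (fun x : Option α => x.elim c g)} := by
  rw [← Fintype.card_sigma]
  refine Fintype.card_congr <| (Equiv.piOptionEquivProd.subtypeEquiv fun f => ?_).trans
    (Equiv.subtypeProdEquivSigmaSubtype fun c g => FibersAtLeastTwo fun x : Option α => x.elim c g)
  have hf : (fun x : Option α => x.elim (f none) fun a => f (some a)) = f :=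
    funext fun x => by cases x <;> rfl
  exact hf ▸ Iff.rfl

theorem card_fibersAtLeastTwo_optionElim (c : β) :
    Fintype.card {g : α → β // FibersAtLeastTwo (fun x : Option α => x.elim c g)} =
      Fintype.card {g : α → β // FibersAtLeastTwo g} +
        Fintype.card {g : α → β // fiberCard g c = 1 ∧ ∀ b ≠ c, 2 ≤ fiberCard g b} := by
  rw [Fintype.card_congr (Equiv.subtypeEquivRight (fibersAtLeastTwo_optionElim_iff c)),
    Fintype.card_subtype_or_disjoint]
  intro p hP hQ g hg
  have := (hQ g hg).1
  exact absurd (hP g hg c) (by omega)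

end Option

section SingletonFiber

variable [DecidableEq α] [DecidableEq β]

def restrictComplEquiv (j : α) (c : β) :
    {g : α → β // g j = c ∧ ∀ x ≠ j, g x ≠ c} ≃ ({x // x ≠ j} → {b // b ≠ c}) where
  toFun g x := ⟨g.1 x, g.2.2 x x.2⟩
  invFun h := ⟨fun x => if hx : x = j then c else h ⟨x, hx⟩, dif_pos rfl,
    fun x hx => by simpa [hx] using (h ⟨x, hx⟩).2⟩
  left_inv g := by
    ext x
    by_cases hx : x = j
    · simp [hx, g.2.1]
    · simp [hx]
  right_inv h := by
    ext x
    simp [x.2]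

variable [Fintype α]

theorem fiberCard_restrictComplEquiv {j : α} {c : β}
    (g : {g : α → β // g j = c ∧ ∀ x ≠ j, g x ≠ c}) {b : β} (hb : b ≠ c) :
    fiberCard (restrictComplEquiv j c g) ⟨b, hb⟩ = fiberCard g.1 b := by
  rw [fiberCard_eq_card_subtype, fiberCard_eq_card_subtype]
  refine Fintype.card_congr <| (Equiv.subtypeEquivRight fun x => Subtype.ext_iff).trans
    (Equiv.subtypeSubtypeEquivSubtype (p := (· ≠ j)) (q := (g.1 · = b)) fun {x} hx => ?_)
  rintro rfl
  exact hb (hx.symm.trans g.2.1)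

theorem fibersAtLeastTwo_restrictComplEquiv_iff {j : α} {c : β}
    (g : {g : α → β // g j = c ∧ ∀ x ≠ j, g x ≠ c}) :
    FibersAtLeastTwo (restrictComplEquiv j c g) ↔ ∀ b ≠ c, 2 ≤ fiberCard g.1 b := by
  simp only [FibersAtLeastTwo, Subtype.forall, fiberCard_restrictComplEquiv]

variable [Fintype β]

theorem card_subtype_eq_sum_card_apply_eq (Q : (α → β) → Prop) [DecidablePred Q] (c : β)
    (hQ : ∀ g, Q g → fiberCard g c = 1) :
    Fintype.card {g // Q g} = ∑ j, Fintype.card {g // Q g ∧ g j = c} := by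
  simp only [Fintype.card_subtype]
  calc #{g | Q g} = ∑ g ∈ {g | Q g}, #{j | g j = c} :=
        (card_eq_sum_ones _).trans (sum_congr rfl fun g hg => (hQ g (by simpa using hg)).symm)
    _ = ∑ j, #{g | Q g ∧ g j = c} := by
        simpa [bipartiteAbove, bipartiteBelow, filter_filter] using
          sum_card_bipartiteAbove_eq_sum_card_bipartiteBelow (s := {g | Q g}) (t := univ)
            (r := fun g j => g j = c)

theorem card_singletonFiber_and_apply_eq (j : α) (c : β) :
    Fintype.card {g : α → β // (fiberCard g c = 1 ∧ ∀ b ≠ c, 2 ≤ fiberCard g b) ∧ g j = c} =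
      phi (Fintype.card β - 1) (Fintype.card α - 1) := by
  calc _ = Fintype.card {g : {g : α → β // g j = c ∧ ∀ x ≠ j, g x ≠ c} //
          ∀ b ≠ c, 2 ≤ fiberCard g.1 b} :=
        Fintype.card_congr <| (Equiv.subtypeEquivRight fun g => ?_).trans
          (Equiv.subtypeSubtypeEquivSubtypeInter (fun g : α → β => g j = c ∧ ∀ x ≠ j, g x ≠ c)
            fun g => ∀ b ≠ c, 2 ≤ fiberCard g b).symm
    _ = Fintype.card {h : {x // x ≠ j} → {b // b ≠ c} // FibersAtLeastTwo h} :=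
        Fintype.card_congr <| (restrictComplEquiv j c).subtypeEquiv fun g =>
          (fibersAtLeastTwo_restrictComplEquiv_iff g).symm
    _ = _ := card_fibersAtLeastTwo.trans (congrArg₂ phi (Set.card_ne_eq c) (Set.card_ne_eq j))
  constructor
  · rintro ⟨⟨h1, h2⟩, hj⟩
    exact ⟨⟨hj, (fiberCard_eq_one_iff hj).mp h1⟩, h2⟩
  · rintro ⟨⟨hj, h1⟩, h2⟩
    exact ⟨⟨(fiberCard_eq_one_iff hj).mpr h1, h2⟩, hj⟩

theorem card_singletonFiber (c : β) :
    Fintype.card {g : α → β // fiberCard g c = 1 ∧ ∀ b ≠ c, 2 ≤ fiberCard g b} =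
      Fintype.card α * phi (Fintype.card β - 1) (Fintype.card α - 1) := by
  rw [card_subtype_eq_sum_card_apply_eq _ c fun g hg => hg.1]
  simp only [card_singletonFiber_and_apply_eq, sum_const, card_univ, smul_eq_mul]

end SingletonFiber

theorem card_fibersAtLeastTwo_option_eq [Fintype α] [DecidableEq α] [Fintype β]
    [DecidableEq β] :
    Fintype.card {f : Option α → β // FibersAtLeastTwo f} =
      Fintype.card β * Fintype.card {g : α → β // FibersAtLeastTwo g} +
        Fintype.card β * Fintype.card α * phi (Fintype.card β - 1) (Fintype.card α - 1) := by
  simp only [card_fibersAtLeastTwo_option, card_fibersAtLeastTwo_optionElim, card_singletonFiber,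
    sum_add_distrib, sum_const, card_univ, smul_eq_mul, mul_assoc]

theorem phi_succ_arg_general (m n : ℕ) :
    phi m (n + 1) = m * phi m n + m * n * phi (m - 1) (n - 1) := by
  simpa [card_fibersAtLeastTwo] using card_fibersAtLeastTwo_option_eq (α := Fin n) (β := Fin m)

theorem phi_succ_arg (m n : ℕ) (hm : 2 ≤ m) (hn : 2 * m ≤ n) :
    phi m (n + 1) = m * phi m n + m * n * phi (m - 1) (n - 1) :=
  phi_succ_arg_general m n
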